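/- arXiv:1807.08950 — 5 statements merged into one kernel-verified Lean document; each statement's English description precedes it below -/
import Mathlib

section
/- Let X and U be Banach spaces, p ∈ [1,∞) ∪ {∞}, and 𝒰 := L^p([0,∞),U) with ‖·‖_𝒰 = ‖·‖_{L^p}. Let (T_t)_{t≥0} be a C₀-semigroup on X and let Φ_t ∈ L(𝒰, X) (bounded linear operators) for t ≥ 0 be such that t ↦ Φ_t(u) is continuous for each u ∈ 𝒰, and suppose φ(t,x₀,u) := T_t x₀ + Φ_t(u) defines a dynamical system with inputs 𝔖 := (X,𝒰,φ). Then 𝔖 is weakly input-to-state stable if and only if 𝔖 is zero-input uniformly locally stable and of weak asymptotic gain. -/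
open MeasureTheory Filter Set Topology
open scoped ENNReal NNReal

noncomputable section

/-- The class `𝒦` of comparison functions: continuous, strictly increasing functions
`γ : [0,∞) → [0,∞)` with `γ 0 = 0` (modelled on `ℝ` via conditions on `Ici 0`). -/
def ClassK (γ : ℝ → ℝ) : Prop :=
  ContinuousOn γ (Ici 0) ∧ StrictMonoOn γ (Ici 0) ∧ γ 0 = 0 ∧ ∀ r : ℝ, 0 ≤ r → 0 ≤ γ r

/-- The class `𝒦 ∪ {0}`. -/
def ClassKZero (γ : ℝ → ℝ) : Prop := ClassK γ ∨ ∀ r : ℝ, γ r = 0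

/-- The class `ℒ` of comparison functions: continuous, strictly decreasing functions
`β : [0,∞) → [0,∞)` with `β r → 0` as `r → ∞`. -/
def ClassL (β : ℝ → ℝ) : Prop :=
  ContinuousOn β (Ici 0) ∧ StrictAntiOn β (Ici 0) ∧ (∀ r : ℝ, 0 ≤ r → 0 ≤ β r) ∧
    Tendsto β atTop (nhds 0)

/-- A (forward-complete) dynamical system with inputs `𝔖 = (X, 𝒰, φ)`. Inputs are
functions `u : ℝ → U` (only the values on `[0,∞)` matter), `inNorm` is the norm `‖·‖_𝒰`. -/
structure DynSysWithInputs (X : Type*) [NormedAddCommGroup X] (U : Type*) where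
  inputs : Set (ℝ → U)
  inputs_nonempty : inputs.Nonempty
  inNorm : (ℝ → U) → ℝ
  inNorm_nonneg : ∀ u ∈ inputs, 0 ≤ inNorm u
  flow : ℝ → X → (ℝ → U) → X
  shift_mem : ∀ u ∈ inputs, ∀ τ : ℝ, 0 ≤ τ → (fun s => u (s + τ)) ∈ inputs
  shift_norm_le : ∀ u ∈ inputs, ∀ τ : ℝ, 0 ≤ τ → inNorm (fun s => u (s + τ)) ≤ inNorm u
  concat_mem : ∀ u₁ ∈ inputs, ∀ u₂ ∈ inputs, ∀ τ : ℝ, 0 ≤ τ →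
    (fun s => if s < τ then u₁ s else u₂ (s - τ)) ∈ inputs
  flow_zero : ∀ (x₀ : X), ∀ u ∈ inputs, flow 0 x₀ u = x₀
  cocycle : ∀ (x₀ : X), ∀ u ∈ inputs, ∀ s t : ℝ, 0 ≤ s → 0 ≤ t →
    flow (t + s) x₀ u = flow t (flow s x₀ u) (fun r => u (r + s))
  flow_continuous : ∀ (x₀ : X), ∀ u ∈ inputs, ContinuousOn (fun t => flow t x₀ u) (Ici 0)
  causal : ∀ (x₀ : X), ∀ u₁ ∈ inputs, ∀ u₂ ∈ inputs, ∀ τ : ℝ, 0 ≤ τ →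
    (∀ s ∈ Icc (0:ℝ) τ, u₁ s = u₂ s) → ∀ t ∈ Icc (0:ℝ) τ, flow t x₀ u₁ = flow t x₀ u₂

variable {X U : Type*} [NormedAddCommGroup X]

/-- Uniform global stability with explicit gains `σ`, `γ`. -/
def UGSWith (S : DynSysWithInputs X U) (σ γ : ℝ → ℝ) : Prop :=
  ∀ (x₀ : X), ∀ u ∈ S.inputs, ∀ t : ℝ, 0 ≤ t →
    ‖S.flow t x₀ u‖ ≤ σ ‖x₀‖ + γ (S.inNorm u)

/-- Uniform global stability. -/
def UGS (S : DynSysWithInputs X U) : Prop :=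
  ∃ σ γ : ℝ → ℝ, ClassK σ ∧ ClassK γ ∧ UGSWith S σ γ

/-- The weak asymptotic gain property with gain `γ`. -/
def WeakAGWith (S : DynSysWithInputs X U) (γ : ℝ → ℝ) : Prop :=
  ∀ ε : ℝ, 0 < ε → ∀ (x₀ : X), ∀ u ∈ S.inputs, ∃ τ : ℝ, 0 ≤ τ ∧
    ∀ t : ℝ, τ ≤ t → ‖S.flow t x₀ u‖ ≤ ε + γ (S.inNorm u)

/-- The weak asymptotic gain property (for some gain in `𝒦 ∪ {0}`). -/
def WeakAG (S : DynSysWithInputs X U) : Prop :=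
  ∃ γ : ℝ → ℝ, ClassKZero γ ∧ WeakAGWith S γ

/-- The strong asymptotic gain property with gain `γ`. -/
def StrongAGWith (S : DynSysWithInputs X U) (γ : ℝ → ℝ) : Prop :=
  ∀ ε : ℝ, 0 < ε → ∀ (x₀ : X), ∃ τ : ℝ, 0 ≤ τ ∧
    ∀ t : ℝ, τ ≤ t → ∀ u ∈ S.inputs, ‖S.flow t x₀ u‖ ≤ ε + γ (S.inNorm u)

/-- The strong asymptotic gain property. -/
def StrongAG (S : DynSysWithInputs X U) : Prop :=
  ∃ γ : ℝ → ℝ, ClassKZero γ ∧ StrongAGWith S γ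

/-- The uniform asymptotic gain property with gain `γ`. -/
def UniformAGWith (S : DynSysWithInputs X U) (γ : ℝ → ℝ) : Prop :=
  ∀ ε : ℝ, 0 < ε → ∀ r : ℝ, 0 < r → ∃ τ : ℝ, 0 ≤ τ ∧
    ∀ t : ℝ, τ ≤ t → ∀ (x₀ : X), ‖x₀‖ ≤ r → ∀ u ∈ S.inputs,
      ‖S.flow t x₀ u‖ ≤ ε + γ (S.inNorm u)

/-- The uniform asymptotic gain property. -/
def UniformAG (S : DynSysWithInputs X U) : Prop :=
  ∃ γ : ℝ → ℝ, ClassKZero γ ∧ UniformAGWith S γ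

/-- The weak limit property with gain `γ`. -/
def WeakLimitWith (S : DynSysWithInputs X U) (γ : ℝ → ℝ) : Prop :=
  ∀ ε : ℝ, 0 < ε → ∀ (x₀ : X), ∀ u ∈ S.inputs, ∃ τ : ℝ, 0 ≤ τ ∧
    sInf ((fun t => ‖S.flow t x₀ u‖) '' Icc (0:ℝ) τ) ≤ ε + γ (S.inNorm u)

/-- The weak limit property. -/
def WeakLimit (S : DynSysWithInputs X U) : Prop :=
  ∃ γ : ℝ → ℝ, ClassK γ ∧ WeakLimitWith S γ

/-- Weak input-to-state stability. -/
def WeakISS (S : DynSysWithInputs X U) : Prop := UGS S ∧ WeakAG S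

/-- Strong input-to-state stability. -/
def StrongISS (S : DynSysWithInputs X U) : Prop := UGS S ∧ StrongAG S

/-- Uniform input-to-state stability. -/
def UniformISS (S : DynSysWithInputs X U) : Prop := UGS S ∧ UniformAG S

/-- Zero-input uniform local stability: `0 ∈ 𝒰` and there exist `σ̲ ∈ 𝒦` and `r > 0` with
`‖φ(t,x₀,0)‖ ≤ σ̲(‖x₀‖)` for all `t ≥ 0` and all `‖x₀‖ ≤ r`. -/
def ZeroInputULS [Zero U] (S : DynSysWithInputs X U) : Prop :=
  (fun _ : ℝ => (0 : U)) ∈ S.inputs ∧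
  ∃ σ : ℝ → ℝ, ClassK σ ∧ ∃ r : ℝ, 0 < r ∧
    ∀ x₀ : X, ‖x₀‖ ≤ r → ∀ t : ℝ, 0 ≤ t → ‖S.flow t x₀ (fun _ : ℝ => (0 : U))‖ ≤ σ ‖x₀‖

/-!
For `⇐`, linearity upgrades the bound `‖T t x₀‖ ≤ σ r` on the ball of radius `r` to
`‖T t‖ ≤ σ r / r`. With `x₀ = 0` the trajectory is `Φ t u`; by the weak asymptotic gain and
continuity it is bounded in `t` for each `u`, so the uniform boundedness principle on the Banach
space `Lᵖ` bounds `‖Φ t‖` uniformly in `t ≥ 0`. The two linear bounds give uniform global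
stability with linear gains. The direction `⇒` is the zero-input case of uniform global stability.
-/

section BoundedLinearOnLp

variable {α E F : Type*} [MeasurableSpace α] [NormedAddCommGroup E] [NormedSpace ℝ E]
  [NormedAddCommGroup F] [NormedSpace ℝ F]

structure IsBoundedLinearOnLp (p : ℝ≥0∞) (μ : Measure α) (Φ : (α → E) → F) : Prop where
  map_add : ∀ u v : α → E, MemLp u p μ → MemLp v p μ → Φ (u + v) = Φ u + Φ v
  map_smul : ∀ (c : ℝ) (u : α → E), MemLp u p μ → Φ (c • u) = c • Φ u
  exists_bound : ∃ C : ℝ, ∀ u : α → E, MemLp u p μ → ‖Φ u‖ ≤ C * (eLpNorm u p μ).toReal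

namespace IsBoundedLinearOnLp

variable {p : ℝ≥0∞} {μ : Measure α} {Φ : (α → E) → F}

theorem map_zero (hΦ : IsBoundedLinearOnLp p μ Φ) : Φ 0 = 0 := by
  obtain ⟨C, hC⟩ := hΦ.exists_bound
  simpa using hC 0 MemLp.zero

theorem congr_ae (hΦ : IsBoundedLinearOnLp p μ Φ) {u v : α → E} (hu : MemLp u p μ)
    (hv : MemLp v p μ) (huv : u =ᵐ[μ] v) : Φ u = Φ v := by
  obtain ⟨C, hC⟩ := hΦ.exists_bound
  have hdiff : ‖Φ (u - v)‖ ≤ 0 := by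
    simpa [eLpNorm_congr_ae (huv.sub_eq : u - v =ᵐ[μ] 0)] using hC _ (hu.sub hv)
  rw [← sub_add_cancel u v, hΦ.map_add _ _ (hu.sub hv) hv, norm_le_zero_iff.mp hdiff, zero_add]

variable [Fact (1 ≤ p)]

def toLp (hΦ : IsBoundedLinearOnLp p μ Φ) : Lp E p μ →L[ℝ] F :=
  LinearMap.mkContinuousOfExistsBound
    { toFun := fun f => Φ f
      map_add' := fun f g => by
        rw [hΦ.congr_ae (Lp.memLp (f + g)) ((Lp.memLp f).add (Lp.memLp g)) (Lp.coeFn_add f g)]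
        exact hΦ.map_add _ _ (Lp.memLp f) (Lp.memLp g)
      map_smul' := fun c f => by
        rw [hΦ.congr_ae (Lp.memLp (c • f)) ((Lp.memLp f).const_smul c) (Lp.coeFn_smul c f)]
        exact hΦ.map_smul c _ (Lp.memLp f) }
    (hΦ.exists_bound.imp fun _ hC f => hC f (Lp.memLp f))

theorem norm_le_of_opNorm_toLp_le (hΦ : IsBoundedLinearOnLp p μ Φ) {C : ℝ}
    (hC : ‖hΦ.toLp‖ ≤ C) {u : α → E} (hu : MemLp u p μ) :
    ‖Φ u‖ ≤ C * (eLpNorm u p μ).toReal := by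
  have h := hΦ.toLp.le_of_opNorm_le hC (hu.toLp u)
  rwa [Lp.norm_def, eLpNorm_congr_ae hu.coeFn_toLp, toLp,
    LinearMap.mkContinuousOfExistsBound_apply, LinearMap.coe_mk, AddHom.coe_mk,
    ← hΦ.congr_ae hu (Lp.memLp _) hu.coeFn_toLp.symm] at h

theorem banach_steinhaus [CompleteSpace E] {ι : Type*} {Φ : ι → (α → E) → F}
    (hΦ : ∀ i, IsBoundedLinearOnLp p μ (Φ i))
    (hbdd : ∀ u : α → E, MemLp u p μ → ∃ B : ℝ, ∀ i, ‖Φ i u‖ ≤ B) :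
    ∃ C : ℝ, ∀ i, ∀ u : α → E, MemLp u p μ → ‖Φ i u‖ ≤ C * (eLpNorm u p μ).toReal := by
  obtain ⟨C, hC⟩ := _root_.banach_steinhaus (g := fun i => (hΦ i).toLp)
    fun f => hbdd f (Lp.memLp f)
  exact ⟨C, fun i _ hu => (hΦ i).norm_le_of_opNorm_toLp_le (hC i) hu⟩

end IsBoundedLinearOnLp

end BoundedLinearOnLp

theorem ClassK.const_mul {c : ℝ} (hc : 0 < c) : ClassK (fun s => c * s) :=
  ⟨(continuous_const_mul c).continuousOn, fun _ _ _ _ hab => mul_lt_mul_of_pos_left hab hc,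
    mul_zero c, fun _ hr => mul_nonneg hc.le hr⟩

theorem ContinuousLinearMap.opNorm_le_div_of_closedBall {E F : Type*}
    [NormedAddCommGroup E] [NormedSpace ℝ E] [NormedAddCommGroup F] [NormedSpace ℝ F]
    (L : E →L[ℝ] F) {r K : ℝ} (hr : 0 < r) (h : ∀ x, ‖x‖ ≤ r → ‖L x‖ ≤ K) : ‖L‖ ≤ K / r := by
  have hK : 0 ≤ K := by simpa using h 0 (by simpa using hr.le)
  refine L.opNorm_le_of_unit_norm (div_nonneg hK hr.le) fun x hx => ?_
  have hrx : ‖L (r • x)‖ ≤ K := h _ (by rw [norm_smul, hx, Real.norm_of_nonneg hr.le, mul_one])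
  rw [map_smul, norm_smul, Real.norm_of_nonneg hr.le] at hrx
  rwa [le_div_iff₀ hr, mul_comm]

section DynSysWithInputs

variable {S : DynSysWithInputs X U}

theorem UGS.of_norm_flow_le (M C : ℝ)
    (h : ∀ x₀ : X, ∀ u ∈ S.inputs, ∀ t : ℝ, 0 ≤ t → ‖S.flow t x₀ u‖ ≤ M * ‖x₀‖ + C * S.inNorm u) :
    UGS S := by
  refine ⟨fun s => (max M 0 + 1) * s, fun s => (max C 0 + 1) * s,
    ClassK.const_mul (by positivity), ClassK.const_mul (by positivity),
    fun x₀ u hu t ht => (h x₀ u hu t ht).trans ?_⟩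
  have hM : M ≤ max M 0 + 1 := (le_max_left M 0).trans (le_add_of_nonneg_right zero_le_one)
  have hC : C ≤ max C 0 + 1 := (le_max_left C 0).trans (le_add_of_nonneg_right zero_le_one)
  have hu₀ := S.inNorm_nonneg u hu
  dsimp only
  gcongr

theorem UGS.zeroInputULS [Zero U] (h : UGS S)
    (h0 : (fun _ : ℝ => (0 : U)) ∈ S.inputs) (hn : S.inNorm (fun _ : ℝ => (0 : U)) = 0) :
    ZeroInputULS S := by
  obtain ⟨σ, γ, hσ, hγ, hUGS⟩ := h
  refine ⟨h0, σ, hσ, 1, one_pos, fun x₀ _ t ht => ?_⟩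
  simpa [hn, hγ.2.2.1] using hUGS x₀ _ h0 t ht

theorem WeakAG.exists_norm_flow_le (h : WeakAG S) (x₀ : X)
    {u : ℝ → U} (hu : u ∈ S.inputs) : ∃ B, ∀ t : ℝ, 0 ≤ t → ‖S.flow t x₀ u‖ ≤ B := by
  obtain ⟨γ, -, hγ⟩ := h
  obtain ⟨τ, -, hτ⟩ := hγ 1 one_pos x₀ u hu
  obtain ⟨B, hB⟩ := isCompact_Icc.exists_bound_of_continuousOn
    ((S.flow_continuous x₀ u hu).mono (Icc_subset_Ici_self : Icc 0 τ ⊆ Ici 0))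
  refine ⟨max B (1 + γ (S.inNorm u)), fun t ht => ?_⟩
  rcases le_total t τ with htτ | hτt
  · exact le_max_of_le_left (hB t ⟨ht, htτ⟩)
  · exact le_max_of_le_right (hτ t hτt)

end DynSysWithInputs

theorem linear_system_weakISS_iff_zeroInputULS_and_weakAG_general
    [NormedSpace ℝ X]
    [NormedAddCommGroup U] [NormedSpace ℝ U] [CompleteSpace U]
    (p : ℝ≥0∞) (hp : 1 ≤ p)
    (T : ℝ → X →L[ℝ] X)
    (Φ : ℝ → (ℝ → U) → X)
    (hΦadd : ∀ t : ℝ, 0 ≤ t → ∀ u v : ℝ → U,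
      MemLp u p (volume.restrict (Ici (0:ℝ))) →
      MemLp v p (volume.restrict (Ici (0:ℝ))) →
      Φ t (u + v) = Φ t u + Φ t v)
    (hΦsmul : ∀ t : ℝ, 0 ≤ t → ∀ (c : ℝ) (u : ℝ → U),
      MemLp u p (volume.restrict (Ici (0:ℝ))) → Φ t (c • u) = c • Φ t u)
    (hΦbdd : ∀ t : ℝ, 0 ≤ t → ∃ C : ℝ, ∀ u : ℝ → U,
      MemLp u p (volume.restrict (Ici (0:ℝ))) →
      ‖Φ t u‖ ≤ C * (eLpNorm u p (volume.restrict (Ici (0:ℝ)))).toReal)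
    (S : DynSysWithInputs X U)
    (hS1 : S.inputs = {u : ℝ → U | MemLp u p (volume.restrict (Ici (0:ℝ)))})
    (hS2 : ∀ u : ℝ → U, S.inNorm u = (eLpNorm u p (volume.restrict (Ici (0:ℝ)))).toReal)
    (hS3 : ∀ (t : ℝ) (x₀ : X) (u : ℝ → U), S.flow t x₀ u = T t x₀ + Φ t u) :
    WeakISS S ↔ (ZeroInputULS S ∧ WeakAG S) := by
  have : Fact (1 ≤ p) := ⟨hp⟩
  have hΦ (t : ℝ) (ht : 0 ≤ t) : IsBoundedLinearOnLp p (volume.restrict (Ici 0)) (Φ t) :=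
    ⟨hΦadd t ht, hΦsmul t ht, hΦbdd t ht⟩
  have hmem (u : ℝ → U) : u ∈ S.inputs ↔ MemLp u p (volume.restrict (Ici 0)) := by simp [hS1]
  have h0 : (fun _ : ℝ => (0 : U)) ∈ S.inputs := (hmem _).2 MemLp.zero
  have hflow_zero (t : ℝ) (ht : 0 ≤ t) (x₀ : X) : S.flow t x₀ (fun _ => 0) = T t x₀ := by
    rw [hS3, ← Pi.zero_def, (hΦ t ht).map_zero, add_zero]
  refine ⟨fun h => ⟨h.1.zeroInputULS h0 (by simp [hS2]), h.2⟩, fun ⟨hULS, hAG⟩ => ⟨?_, hAG⟩⟩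
  obtain ⟨-, σ, hσK, r, hr, hσ⟩ := hULS
  have hT (t : ℝ) (ht : 0 ≤ t) : ‖T t‖ ≤ σ r / r :=
    (T t).opNorm_le_div_of_closedBall hr fun x hx => hflow_zero t ht x ▸
      (hσ x hx t ht).trans (hσK.2.1.monotoneOn (norm_nonneg x) hr.le hx)
  obtain ⟨C, hC⟩ := IsBoundedLinearOnLp.banach_steinhaus (Φ := fun t : Ici (0:ℝ) => Φ t)
    (fun t => hΦ t t.2) fun u hu => by
      obtain ⟨B, hB⟩ := hAG.exists_norm_flow_le 0 ((hmem u).2 hu)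
      exact ⟨B, fun t => by simpa [hS3] using hB t t.2⟩
  refine UGS.of_norm_flow_le (σ r / r) C fun x₀ u hu t ht => ?_
  rw [hS3, hS2]
  exact (norm_add_le _ _).trans <|
    add_le_add ((T t).le_of_opNorm_le (hT t ht) x₀) (hC ⟨t, ht⟩ u ((hmem u).1 hu))

/-- **Proposition 5.3.** Let `X`, `U` be Banach spaces, `p ∈ [1,∞]`,
`𝒰 = L^p([0,∞),U)`, `(T_t)` a `C₀`-semigroup on `X`, and `Φ_t : 𝒰 → X` bounded linear
operators with `t ↦ Φ_t(u)` continuous. If `φ(t,x₀,u) := T_t x₀ + Φ_t(u)` defines a dynamical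
system with inputs, then this system is weakly input-to-state stable if and only if it is
zero-input uniformly locally stable and of weak asymptotic gain. -/
theorem linear_system_weakISS_iff_zeroInputULS_and_weakAG
    [NormedSpace ℝ X] [CompleteSpace X]
    [NormedAddCommGroup U] [NormedSpace ℝ U] [CompleteSpace U]
    (p : ℝ≥0∞) (hp : 1 ≤ p)
    (T : ℝ → X →L[ℝ] X)
    (hT0 : T 0 = ContinuousLinearMap.id ℝ X)
    (hTsem : ∀ s t : ℝ, 0 ≤ s → 0 ≤ t → T (t + s) = (T t).comp (T s))
    (hTcont : ∀ x : X, ContinuousOn (fun t => T t x) (Ici 0))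
    (Φ : ℝ → (ℝ → U) → X)
    (hΦadd : ∀ t : ℝ, 0 ≤ t → ∀ u v : ℝ → U,
      MemLp u p (volume.restrict (Ici (0:ℝ))) →
      MemLp v p (volume.restrict (Ici (0:ℝ))) →
      Φ t (u + v) = Φ t u + Φ t v)
    (hΦsmul : ∀ t : ℝ, 0 ≤ t → ∀ (c : ℝ) (u : ℝ → U),
      MemLp u p (volume.restrict (Ici (0:ℝ))) → Φ t (c • u) = c • Φ t u)
    (hΦbdd : ∀ t : ℝ, 0 ≤ t → ∃ C : ℝ, ∀ u : ℝ → U,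
      MemLp u p (volume.restrict (Ici (0:ℝ))) →
      ‖Φ t u‖ ≤ C * (eLpNorm u p (volume.restrict (Ici (0:ℝ)))).toReal)
    (hΦcont : ∀ u : ℝ → U, MemLp u p (volume.restrict (Ici (0:ℝ))) →
      ContinuousOn (fun t => Φ t u) (Ici 0))
    (S : DynSysWithInputs X U)
    (hS1 : S.inputs = {u : ℝ → U | MemLp u p (volume.restrict (Ici (0:ℝ)))})
    (hS2 : ∀ u : ℝ → U, S.inNorm u = (eLpNorm u p (volume.restrict (Ici (0:ℝ)))).toReal)
    (hS3 : ∀ (t : ℝ) (x₀ : X) (u : ℝ → U), S.flow t x₀ u = T t x₀ + Φ t u) :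
    WeakISS S ↔ (ZeroInputULS S ∧ WeakAG S) :=
  linear_system_weakISS_iff_zeroInputULS_and_weakAG_general p hp T Φ hΦadd hΦsmul hΦbdd S hS1 hS2
    hS3
end
end

section
/- Let b ∈ L²([0,∞),ℝ) satisfy b(ζ) ≥ 0 for almost every ζ ≥ 0 and b ∉ L¹([0,∞),ℝ), i.e., ∫₀^∞ b(ζ) dζ = ∞. For t ≥ 0 define g_t ∈ L²([0,∞),ℝ) by g_t(ζ) := ∫₀^t b(ζ+s) ds. Then liminf_{t→∞} ‖g_t‖_{L²} = ∞; in particular, for every C > 0 there exists t ≥ 0 with ‖g_t‖_{L²} > C. -/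
open MeasureTheory Filter Set Topology
open scoped ENNReal NNReal

/-!
For `0 ≤ ζ ≤ 1 ≤ t`, nonnegativity of `b` gives `∫₀^t b(ζ+s) ds = ∫_ζ^{ζ+t} b ≥ ∫₁^t b`, so already
the `L²([0,1])` norm of `g_t` is at least `∫₁^t b`. Since `b` is integrable on `[0,1]`, the tail
`∫₁^∞ b` is infinite, hence `‖g_t‖_{L²} → ∞`.
-/

theorem tendsto_setLIntegral_iUnion_atTop {α ι : Type*} [MeasurableSpace α] {μ : Measure α}
    [SFinite μ] [Preorder ι] [IsCountablyGenerated (atTop : Filter ι)] (f : α → ℝ≥0∞)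
    {s : ι → Set α} (hs : Monotone s) :
    Tendsto (fun i => ∫⁻ x in s i, f x ∂μ) atTop (𝓝 (∫⁻ x in ⋃ i, s i, f x ∂μ)) := by
  simpa only [Function.comp_def, withDensity_apply'] using
    tendsto_measure_iUnion_atTop (μ := μ.withDensity f) hs

theorem setLIntegral_Ioi_eq_top_of_setLIntegral_Ici_eq_top {μ : Measure ℝ} {f : ℝ → ℝ≥0∞}
    {a c : ℝ} (hf : ∫⁻ x in Ici a, f x ∂μ = ∞) (hfin : ∫⁻ x in Icc a c, f x ∂μ ≠ ∞) :
    ∫⁻ x in Ioi c, f x ∂μ = ∞ := by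
  have hcover : Ici a ⊆ Icc a c ∪ Ioi c := fun x (hx : a ≤ x) =>
    (le_or_gt x c).imp (fun hxc => ⟨hx, hxc⟩) id
  have : ∞ ≤ (∫⁻ x in Icc a c, f x ∂μ) + ∫⁻ x in Ioi c, f x ∂μ :=
    hf ▸ (lintegral_mono_set hcover).trans (lintegral_union_le _ _ _)
  exact (ENNReal.add_eq_top.mp (top_le_iff.mp this)).resolve_left hfin

theorem MeasureTheory.MemLp.integrableOn_of_subset {α E : Type*} [MeasurableSpace α]
    [NormedAddCommGroup E] {μ : Measure α} {f : α → E} {p : ℝ≥0∞} {s t : Set α} (hf : MemLp f p (μ.restrict t))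
    (hp : 1 ≤ p) (hst : s ⊆ t) (hs : μ s ≠ ∞) : IntegrableOn f s μ :=
  have : IsFiniteMeasure (μ.restrict s) := isFiniteMeasure_restrict.mpr hs
  (hf.mono_measure (Measure.restrict_mono hst le_rfl)).integrable hp

theorem setLIntegral_Ioc_le_ofReal_intervalIntegral_comp_add {b : ℝ → ℝ} {a ζ t : ℝ}
    (hζ : 0 ≤ ζ) (hζa : ζ ≤ a) (ht : 0 ≤ t) (hint : IntegrableOn b (Ioc ζ (ζ + t)))
    (hnn : ∀ᵐ x ∂volume.restrict (Ioc ζ (ζ + t)), 0 ≤ b x) :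
    ∫⁻ x in Ioc a t, ENNReal.ofReal (b x) ≤ ENNReal.ofReal (∫ s in 0..t, b (ζ + s)) := by
  rw [intervalIntegral.integral_comp_add_left, add_zero,
    intervalIntegral.integral_of_le (by linarith), ofReal_integral_eq_lintegral_ofReal hint hnn]
  exact lintegral_mono_set (Ioc_subset_Ioc hζa (by linarith))

theorem mul_measure_rpow_le_eLpNorm {α E : Type*} [MeasurableSpace α] [NormedAddCommGroup E]
    {μ : Measure α} {f : α → E} {p : ℝ≥0∞} {s : Set α} {c : ℝ≥0∞} (hs : MeasurableSet s)
    (hp : p ≠ 0) (hp_top : p ≠ ∞) (hc : ∀ x ∈ s, c ≤ ‖f x‖ₑ) :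
    c * μ s ^ (1 / p.toReal) ≤ eLpNorm f p μ :=
  calc c * μ s ^ (1 / p.toReal) = eLpNorm (fun _ => c) p (μ.restrict s) := by
        rw [eLpNorm_const' c hp hp_top, Measure.restrict_apply_univ, enorm_eq_self]
    _ ≤ eLpNorm f p (μ.restrict s) :=
        eLpNorm_mono_enorm_ae ((ae_restrict_iff' hs).mpr (ae_of_all _ hc))
    _ ≤ eLpNorm f p μ := eLpNorm_restrict_le f p μ s

theorem setLIntegral_Ioc_le_eLpNorm_intervalIntegral_comp_add {b : ℝ → ℝ} {p : ℝ≥0∞} {t : ℝ}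
    (hp : p ≠ 0) (hp_top : p ≠ ∞) (ht : 0 ≤ t) (hint : IntegrableOn b (Ioc 0 (1 + t)))
    (hnn : ∀ᵐ x ∂volume.restrict (Ioc 0 (1 + t)), 0 ≤ b x) :
    ∫⁻ x in Ioc 1 t, ENNReal.ofReal (b x) ≤
      eLpNorm (fun ζ : ℝ => ∫ s in (0:ℝ)..t, b (ζ + s)) p (volume.restrict (Ici 0)) := by
  have hsub : ∀ ζ ∈ Icc (0:ℝ) 1, Ioc ζ (ζ + t) ⊆ Ioc 0 (1 + t) := fun ζ hζ =>
    Ioc_subset_Ioc hζ.1 (by linarith [hζ.2])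
  have h := mul_measure_rpow_le_eLpNorm (μ := volume.restrict (Ici (0:ℝ)))
    measurableSet_Icc hp hp_top fun ζ hζ =>
      (setLIntegral_Ioc_le_ofReal_intervalIntegral_comp_add hζ.1 hζ.2 ht
        (hint.mono_set (hsub ζ hζ)) (ae_restrict_of_ae_restrict_of_subset (hsub ζ hζ) hnn)).trans
      (Real.ofReal_le_enorm _)
  simpa [Measure.restrict_apply measurableSet_Icc, inter_eq_left.mpr Icc_subset_Ici_self] using h

/-- Let `b ∈ L²([0,∞),ℝ)` be a.e. nonnegative with `∫₀^∞ b = ∞`, and for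
`t ≥ 0` let `g_t(ζ) := ∫₀^t b(ζ+s) ds`. Then `liminf_{t→∞} ‖g_t‖_{L²} = ∞`; in particular,
for every `C > 0` there is a `t ≥ 0` with `‖g_t‖_{L²} > C`. -/
theorem liminf_translates_integral_norm_eq_top
    (b : ℝ → ℝ)
    (hb : MemLp b 2 (volume.restrict (Ici (0:ℝ))))
    (hbnn : ∀ᵐ ζ ∂(volume.restrict (Ici (0:ℝ))), 0 ≤ b ζ)
    (hbnotL1 : ∫⁻ ζ in Ici (0:ℝ), ENNReal.ofReal (b ζ) = ⊤) :
    Filter.liminf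
        (fun t : ℝ =>
          eLpNorm (fun ζ : ℝ => ∫ s in (0:ℝ)..t, b (ζ + s)) 2 (volume.restrict (Ici (0:ℝ))))
        Filter.atTop = ⊤ ∧
      ∀ C : ℝ, 0 < C → ∃ t : ℝ, 0 ≤ t ∧
        ENNReal.ofReal C
          < eLpNorm (fun ζ : ℝ => ∫ s in (0:ℝ)..t, b (ζ + s)) 2 (volume.restrict (Ici (0:ℝ))) := by
  have hintOn : ∀ {s : Set ℝ}, s ⊆ Ici 0 → volume s ≠ ∞ → IntegrableOn b s :=
    hb.integrableOn_of_subset one_le_two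
  have htail : ∫⁻ x in Ioi 1, ENNReal.ofReal (b x) = ∞ :=
    setLIntegral_Ioi_eq_top_of_setLIntegral_Ici_eq_top hbnotL1
      (ne_top_of_le_ne_top (hintOn Icc_subset_Ici_self measure_Icc_lt_top.ne).2.ne
        (lintegral_mono fun x => Real.ofReal_le_enorm (b x)))
  have hbound : ∀ t ≥ 0, ∫⁻ x in Ioc 1 t, ENNReal.ofReal (b x) ≤
      eLpNorm (fun ζ : ℝ => ∫ s in (0:ℝ)..t, b (ζ + s)) 2 (volume.restrict (Ici (0:ℝ))) :=
    fun t ht =>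
      have hsub : Ioc 0 (1 + t) ⊆ Ici 0 := Ioc_subset_Icc_self.trans Icc_subset_Ici_self
      setLIntegral_Ioc_le_eLpNorm_intervalIntegral_comp_add two_ne_zero ENNReal.ofNat_ne_top ht
        (hintOn hsub measure_Ioc_lt_top.ne) (ae_restrict_of_ae_restrict_of_subset hsub hbnn)
  have htend : Tendsto (fun t : ℝ =>
      eLpNorm (fun ζ : ℝ => ∫ s in (0:ℝ)..t, b (ζ + s)) 2 (volume.restrict (Ici (0:ℝ))))
      atTop (𝓝 ⊤) := by
    refine tendsto_nhds_top_mono ?_ (eventually_ge_atTop 0 |>.mono hbound)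
    simpa [htail] using tendsto_setLIntegral_iUnion_atTop (μ := volume)
      (fun x => ENNReal.ofReal (b x)) (s := Ioc (1:ℝ)) fun _ _ h => Ioc_subset_Ioc_right h
  refine ⟨htend.liminf_eq, fun C _ => ?_⟩
  obtain ⟨t, hCt, ht⟩ := ((htend.eventually (eventually_gt_nhds ENNReal.ofReal_lt_top)).and
    (eventually_ge_atTop 0)).exists
  exact ⟨t, ht, hCt⟩
end

section
/- Let X := L²([0,∞),ℝ) and let 𝒰 := { u ∈ L^∞([0,∞),ℝ) : u is eventually exponentially decaying to 0, i.e., there exist τ_u ≥ 0 and C_u, α_u > 0 with |u(s)| ≤ C_u e^{−α_u s} for all s ≥ τ_u }, equipped with ‖·‖_𝒰 := ‖·‖_{L^∞}. Let b ∈ L²([0,∞),ℝ) with b ≥ 0 almost everywhere and b ∉ L¹([0,∞),ℝ), and define φ : [0,∞) × X × 𝒰 → X by φ(t,x₀,u)(ζ) := x₀(ζ+t) + ∫₀^t u(s) b(ζ+t−s) ds. Then the system 𝔖 := (X,𝒰,φ) is NOT uniformly locally stable: for all σ̲, γ̲ ∈ 𝒦 and all r > 0 there exist (x₀,u) ∈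 X × 𝒰 with ‖x₀‖ ≤ r and ‖u‖_𝒰 ≤ r and a time t ≥ 0 such that ‖φ(t,x₀,u)‖ > σ̲(‖x₀‖) + γ̲(‖u‖_𝒰). In particular, 𝔖 is not weakly input-to-state stable. -/
/-!
Take `x₀ = 0` and an input `u` equal to `r` on `[0, t]` and decaying exponentially afterwards.
Then `φ(t, 0, u)(ζ) = r ∫_ζ^{ζ+t} b`, which for `ζ ∈ [0, 1]` is at least `r ∫_1^t b`; as `b ∉ L¹`
this exceeds `γ(r)` for `t` large, while `σ(0) = 0`. The final state does lie in `L²`, since a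
sliding-window integral of width `t` has `L²` norm at most `t ‖b‖₂` (Cauchy–Schwarz and Tonelli),
so the `toReal` of its norm is the true norm and not the junk value `(⊤).toReal = 0`.
-/

open MeasureTheory Filter Set Topology
open scoped ENNReal NNReal

noncomputable section

/-- The input space of the counterexample of Section 5.1: essentially bounded functions
`u : [0,∞) → ℝ` that are eventually exponentially decaying to `0`. -/
def ExpDecaySet : Set (ℝ → ℝ) :=
  {u | MemLp u ⊤ (volume.restrict (Ici (0:ℝ))) ∧
    ∃ τ C a : ℝ, 0 ≤ τ ∧ 0 < C ∧ 0 < a ∧ ∀ s : ℝ, τ ≤ s → |u s| ≤ C * Real.exp (-a * s)}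

/-- The flow of the counterexample of Section 5.1: the left-translation semigroup on
`L²([0,∞),ℝ)` with input operator `B v = v·b`, i.e.
`φ(t,x₀,u)(ζ) = x₀(ζ+t) + ∫₀^t u(s) b(ζ+t−s) ds`. -/
def shiftFlow (b : ℝ → ℝ) (t : ℝ) (x₀ u : ℝ → ℝ) : ℝ → ℝ :=
  fun ζ => x₀ (ζ + t) + ∫ s in (0:ℝ)..t, u s * b (ζ + t - s)

theorem sq_lintegral_le_measure_univ_mul {α : Type*} [MeasurableSpace α] (μ : Measure α)
    {G : α → ℝ≥0∞} (hG : AEMeasurable G μ) :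
    (∫⁻ x, G x ∂μ) ^ 2 ≤ μ univ * ∫⁻ x, G x ^ 2 ∂μ := by
  have h := ENNReal.lintegral_mul_le_Lp_mul_Lq μ Real.HolderConjugate.two_two
    aemeasurable_const hG (f := fun _ => 1)
  simp only [Pi.mul_apply, one_mul, ENNReal.one_rpow, lintegral_const] at h
  calc (∫⁻ x, G x ∂μ) ^ 2
      ≤ (μ univ ^ (1 / 2 : ℝ) * (∫⁻ x, G x ^ (2 : ℝ) ∂μ) ^ (1 / 2 : ℝ)) ^ 2 := by gcongr
    _ = μ univ * ∫⁻ x, G x ^ 2 ∂μ := by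
      simp_rw [mul_pow, ← ENNReal.rpow_natCast, ← ENNReal.rpow_mul, ENNReal.rpow_two]
      norm_num

theorem eLpNorm_two_sq {α ε : Type*} [MeasurableSpace α] [ENorm ε] (μ : Measure α) (f : α → ε) :
    eLpNorm f 2 μ ^ 2 = ∫⁻ x, ‖f x‖ₑ ^ 2 ∂μ := by
  simpa [ENNReal.rpow_two] using
    eLpNorm_nnreal_pow_eq_lintegral (μ := μ) (f := f) (p := 2) two_ne_zero

theorem lintegral_sq_setLIntegral_Ioc_add_le {G : ℝ → ℝ≥0∞} (hG : Measurable G) (t : ℝ) :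
    ∫⁻ ζ, (∫⁻ s in Ioc 0 t, G (ζ + s)) ^ 2 ≤ ENNReal.ofReal t ^ 2 * ∫⁻ y, G y ^ 2 := by
  have hvol : volume (Ioc 0 t) = ENNReal.ofReal t := by simp
  calc ∫⁻ ζ, (∫⁻ s in Ioc 0 t, G (ζ + s)) ^ 2
      ≤ ∫⁻ ζ, ENNReal.ofReal t * ∫⁻ s in Ioc 0 t, G (ζ + s) ^ 2 := by
        refine lintegral_mono fun ζ => ?_
        have := sq_lintegral_le_measure_univ_mul (volume.restrict (Ioc 0 t))
          (hG.comp (measurable_const_add ζ)).aemeasurable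
        rwa [Measure.restrict_apply_univ, hvol] at this
    _ = ENNReal.ofReal t * ∫⁻ s in Ioc 0 t, ∫⁻ ζ, G (ζ + s) ^ 2 := by
        rw [lintegral_const_mul' _ _ ENNReal.ofReal_ne_top, lintegral_lintegral_swap]
        exact ((hG.comp measurable_add).pow_const 2).aemeasurable
    _ = ENNReal.ofReal t ^ 2 * ∫⁻ y, G y ^ 2 := by
        simp_rw [lintegral_add_right_eq_self (fun y => G y ^ 2), setLIntegral_const, hvol]
        ring

theorem eLpNorm_intervalIntegral_comp_add_le {E : Type*} [NormedAddCommGroup E] [NormedSpace ℝ E]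
    {f : ℝ → E} (hf : AEStronglyMeasurable f volume) {t : ℝ} (ht : 0 ≤ t) :
    eLpNorm (fun ζ => ∫ s in 0..t, f (ζ + s)) 2 volume ≤ ENNReal.ofReal t * eLpNorm f 2 volume := by
  obtain ⟨G, hG, hfG⟩ := hf.enorm
  have hwindow : ∀ ζ, ‖∫ s in 0..t, f (ζ + s)‖ₑ ≤ ∫⁻ s in Ioc 0 t, G (ζ + s) := fun ζ => by
    rw [intervalIntegral.integral_of_le ht]
    refine (enorm_integral_le_lintegral_enorm _).trans_eq
      (lintegral_congr_ae (ae_restrict_of_ae ?_))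
    exact (measurePreserving_add_left volume ζ).quasiMeasurePreserving.ae_eq_comp hfG
  rw [← ENNReal.pow_le_pow_left_iff two_ne_zero, mul_pow, eLpNorm_two_sq, eLpNorm_two_sq]
  calc ∫⁻ ζ, ‖∫ s in 0..t, f (ζ + s)‖ₑ ^ 2
      ≤ ∫⁻ ζ, (∫⁻ s in Ioc 0 t, G (ζ + s)) ^ 2 := lintegral_mono fun ζ => by gcongr; exact hwindow ζ
    _ ≤ ENNReal.ofReal t ^ 2 * ∫⁻ y, G y ^ 2 := lintegral_sq_setLIntegral_Ioc_add_le hG t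
    _ = ENNReal.ofReal t ^ 2 * ∫⁻ y, ‖f y‖ₑ ^ 2 := by
      congr 1
      exact lintegral_congr_ae (hfG.fun_comp (· ^ 2)).symm

theorem exists_lt_intervalIntegral_of_not_integrableOn_Ioi {f : ℝ → ℝ} {a : ℝ}
    (hf : LocallyIntegrable f volume) (hnn : ∀ᵐ x ∂volume.restrict (Ioi a), 0 ≤ f x)
    (hnot : ¬ IntegrableOn f (Ioi a)) (M : ℝ) : ∃ t, a ≤ t ∧ M < ∫ x in a..t, f x := by
  by_contra! hbdd
  refine hnot (integrableOn_Ioi_of_intervalIntegral_norm_bounded M a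
    (fun t => (hf.integrableOn_isCompact isCompact_Icc).mono_set Ioc_subset_Icc_self)
    tendsto_id ?_)
  filter_upwards [eventually_ge_atTop a] with t hat
  refine le_of_eq_of_le (intervalIntegral.integral_congr_ae ?_) (hbdd t hat)
  rw [ae_restrict_iff' measurableSet_Ioi] at hnn
  filter_upwards [hnn] with x hx hxt
  rw [id, uIoc_of_le hat] at hxt
  exact Real.norm_of_nonneg (hx hxt.1)

theorem shiftFlow_zero_of_eq_const {b u : ℝ → ℝ} {r t : ℝ} (hu : ∀ s ∈ uIcc 0 t, u s = r) (ζ : ℝ) :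
    shiftFlow b t (fun _ => 0) u ζ = r * ∫ s in 0..t, b (ζ + s) := by
  have hsub := intervalIntegral.integral_comp_sub_left (fun s => b (ζ + s)) (a := 0) (b := t) t
  simp only [sub_self, sub_zero, ← add_sub_assoc] at hsub
  rw [shiftFlow, zero_add, intervalIntegral.integral_congr (g := fun s => r * b (ζ + t - s))
    fun s hs => by rw [hu s hs], intervalIntegral.integral_const_mul, hsub]

theorem ofReal_intervalIntegral_le_eLpNorm_Ici {f : ℝ → ℝ} (hf : LocallyIntegrable f volume)
    (hnn : 0 ≤ᵐ[volume] f) {t : ℝ} (ht : 1 ≤ t) :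
    ENNReal.ofReal (∫ y in 1..t, f y) ≤
      eLpNorm (fun ζ => ∫ s in 0..t, f (ζ + s)) 2 (volume.restrict (Ici 0)) := by
  set I := ∫ y in 1..t, f y
  have hI : 0 ≤ I := intervalIntegral.integral_nonneg_of_ae ht hnn
  have hwindow : ∀ ζ ∈ Icc (0 : ℝ) 1, I ≤ ∫ s in 0..t, f (ζ + s) := fun ζ hζ => by
    rw [intervalIntegral.integral_comp_add_left, add_zero]
    exact intervalIntegral.integral_mono_interval hζ.2 ht (by linarith [hζ.1])
      (ae_restrict_of_ae hnn) ((hf.integrableOn_isCompact isCompact_uIcc).intervalIntegrable)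
  have hIcc : volume.restrict (Ici (0 : ℝ)) (Icc (0 : ℝ) 1) = 1 := by
    rw [Measure.restrict_apply measurableSet_Icc, inter_eq_left.mpr Icc_subset_Ici_self,
      Real.volume_Icc, sub_zero, ENNReal.ofReal_one]
  calc ENNReal.ofReal I
      = eLpNorm ((Icc (0 : ℝ) 1).indicator fun _ => I) 2 (volume.restrict (Ici 0)) := by
        rw [eLpNorm_indicator_const measurableSet_Icc two_ne_zero ENNReal.ofNat_ne_top, hIcc,
          ENNReal.one_rpow, mul_one, Real.enorm_of_nonneg hI]
    _ ≤ eLpNorm (fun ζ => ∫ s in 0..t, f (ζ + s)) 2 (volume.restrict (Ici 0)) := by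
        refine eLpNorm_mono fun ζ => ?_
        by_cases hζ : ζ ∈ Icc 0 1
        · rw [indicator_of_mem hζ, Real.norm_of_nonneg hI]
          exact (hwindow ζ hζ).trans (le_abs_self _)
        · rw [indicator_of_notMem hζ, norm_zero]
          exact norm_nonneg _

theorem not_integrableOn_Ioi_of_lintegral_Ici_eq_top {f : ℝ → ℝ} {a c : ℝ}
    (hf : LocallyIntegrable f volume) (htop : ∫⁻ x in Ici a, ENNReal.ofReal (f x) = ⊤)
    (hac : a ≤ c) : ¬ IntegrableOn f (Ioi c) := fun hInt => by
  have hIci : IntegrableOn f (Ici a) := by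
    rw [← Icc_union_Ioi_eq_Ici hac]
    exact (hf.integrableOn_isCompact isCompact_Icc).union hInt
  exact hIci.lintegral_lt_top.ne htop

def expTailInput (r t s : ℝ) : ℝ := r * Real.exp (min 0 (t - s))

theorem continuous_expTailInput (r t : ℝ) : Continuous (expTailInput r t) := by
  unfold expTailInput
  fun_prop

theorem expTailInput_of_le {r t s : ℝ} (hs : s ≤ t) : expTailInput r t s = r := by
  simp [expTailInput, hs]

theorem abs_expTailInput_le {r : ℝ} (hr : 0 ≤ r) (t s : ℝ) : |expTailInput r t s| ≤ r := by
  rw [expTailInput, abs_of_nonneg (by positivity)]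
  exact mul_le_of_le_one_right hr (Real.exp_le_one_iff.mpr (min_le_left _ _))

theorem expTailInput_mem_expDecaySet {r t : ℝ} (hr : 0 < r) (ht : 0 ≤ t) :
    expTailInput r t ∈ ExpDecaySet := by
  refine ⟨memLp_top_of_bound (continuous_expTailInput r t).aestronglyMeasurable r
    (ae_of_all _ (abs_expTailInput_le hr.le t)), t, r * Real.exp t, 1, ht, by positivity,
    one_pos, fun s hs => ?_⟩
  rw [abs_of_nonneg (by unfold expTailInput; positivity), expTailInput,
    min_eq_right (by linarith), mul_assoc, ← Real.exp_add]
  exact le_of_eq (by ring_nf)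

theorem eLpNorm_top_expTailInput_le {r : ℝ} (hr : 0 ≤ r) (t : ℝ) (μ : Measure ℝ) :
    (eLpNorm (expTailInput r t) ⊤ μ).toReal ≤ r :=
  ENNReal.toReal_le_of_le_ofReal hr <| (eLpNorm_exponent_top (f := expTailInput r t)).trans_le <|
    eLpNormEssSup_le_of_ae_bound (ae_of_all _ (abs_expTailInput_le hr t))

theorem exists_lt_toReal_eLpNorm_intervalIntegral_comp_add {f : ℝ → ℝ} (hf : MemLp f 2 volume)
    (hnn : 0 ≤ᵐ[volume] f) (hnot : ¬ IntegrableOn f (Ioi 1)) (M : ℝ) :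
    ∃ t, 0 ≤ t ∧
      M < (eLpNorm (fun ζ => ∫ s in 0..t, f (ζ + s)) 2 (volume.restrict (Ici 0))).toReal := by
  have hfloc : LocallyIntegrable f volume := hf.locallyIntegrable one_le_two
  obtain ⟨t, ht1, ht⟩ :=
    exists_lt_intervalIntegral_of_not_integrableOn_Ioi hfloc (ae_restrict_of_ae hnn) hnot M
  have ht0 : 0 ≤ t := by linarith
  have hfin : eLpNorm (fun ζ => ∫ s in 0..t, f (ζ + s)) 2 (volume.restrict (Ici 0)) ≠ ⊤ :=
    ((eLpNorm_mono_measure _ Measure.restrict_le_self).trans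
      (eLpNorm_intervalIntegral_comp_add_le hf.1 ht0)).trans_lt
      (ENNReal.mul_lt_top ENNReal.ofReal_lt_top hf.2) |>.ne
  exact ⟨t, ht0, ht.trans_le <| (ENNReal.ofReal_le_iff_le_toReal hfin).1
    (ofReal_intervalIntegral_le_eLpNorm_Ici hfloc hnn ht1)⟩

theorem shiftFlow_expTailInput_ae_eq (b : ℝ → ℝ) {r t : ℝ} (ht : 0 ≤ t) :
    shiftFlow b t (fun _ => 0) (expTailInput r t) =ᵐ[volume.restrict (Ici 0)]
      r • fun ζ => ∫ s in 0..t, (Ici 0).indicator b (ζ + s) := by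
  filter_upwards [ae_restrict_mem measurableSet_Ici] with ζ hζ
  rw [shiftFlow_zero_of_eq_const fun s hs => expTailInput_of_le (uIcc_of_le ht ▸ hs).2]
  refine congrArg (r * ·) (intervalIntegral.integral_congr fun s hs => ?_)
  rw [uIcc_of_le ht] at hs
  exact (indicator_of_mem (mem_Ici.2 (add_nonneg hζ hs.1)) b).symm

theorem exists_lt_toReal_eLpNorm_shiftFlow_expTailInput {b : ℝ → ℝ}
    (hb : MemLp b 2 (volume.restrict (Ici 0))) (hbnn : ∀ᵐ ζ ∂volume.restrict (Ici 0), 0 ≤ b ζ)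
    (hbnotL1 : ∫⁻ ζ in Ici 0, ENNReal.ofReal (b ζ) = ⊤) {r : ℝ} (hr : 0 < r) (M : ℝ) :
    ∃ t, 0 ≤ t ∧ M < (eLpNorm (shiftFlow b t (fun _ => 0) (expTailInput r t)) 2
      (volume.restrict (Ici 0))).toReal := by
  set f := (Ici (0:ℝ)).indicator b
  have hf2 : MemLp f 2 volume := (memLp_indicator_iff_restrict measurableSet_Ici).2 hb
  have hfnn : 0 ≤ᵐ[volume] f := by
    filter_upwards [(ae_restrict_iff' measurableSet_Ici).1 hbnn] with y hy
    exact indicator_apply_nonneg hy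
  have hftop : ∫⁻ y in Ici 0, ENNReal.ofReal (f y) = ⊤ :=
    (setLIntegral_congr_fun measurableSet_Ici fun y hy =>
      congrArg ENNReal.ofReal (indicator_of_mem hy b)).trans hbnotL1
  obtain ⟨t, ht0, ht⟩ := exists_lt_toReal_eLpNorm_intervalIntegral_comp_add hf2 hfnn
    (not_integrableOn_Ioi_of_lintegral_Ici_eq_top (hf2.locallyIntegrable one_le_two) hftop
      zero_le_one) (M / r)
  refine ⟨t, ht0, ?_⟩
  rw [eLpNorm_congr_ae (shiftFlow_expTailInput_ae_eq b ht0), eLpNorm_const_smul,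
    ENNReal.toReal_mul, toReal_enorm, Real.norm_of_nonneg hr.le]
  exact (div_lt_iff₀' hr).1 ht

/-- Let `X = L²([0,∞),ℝ)`, let `𝒰` be the set of essentially bounded
functions eventually exponentially decaying to `0` with the `L^∞`-norm, let `b ∈ L²([0,∞),ℝ)`
be a.e. nonnegative with `∫₀^∞ b = ∞`, and let `φ(t,x₀,u)(ζ) = x₀(ζ+t) + ∫₀^t u(s) b(ζ+t−s) ds`.
Then the system `(X,𝒰,φ)` is NOT uniformly locally stable (hence not weakly
input-to-state stable). -/
theorem shift_system_not_uniformly_locally_stable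
    (b : ℝ → ℝ)
    (hb : MemLp b 2 (volume.restrict (Ici (0:ℝ))))
    (hbnn : ∀ᵐ ζ ∂(volume.restrict (Ici (0:ℝ))), 0 ≤ b ζ)
    (hbnotL1 : ∫⁻ ζ in Ici (0:ℝ), ENNReal.ofReal (b ζ) = ⊤) :
    ∀ σ γ : ℝ → ℝ, ClassK σ → ClassK γ → ∀ r : ℝ, 0 < r →
      ∃ x₀ : ℝ → ℝ, MemLp x₀ 2 (volume.restrict (Ici (0:ℝ))) ∧
        (eLpNorm x₀ 2 (volume.restrict (Ici (0:ℝ)))).toReal ≤ r ∧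
        ∃ u ∈ ExpDecaySet,
          (eLpNorm u ⊤ (volume.restrict (Ici (0:ℝ)))).toReal ≤ r ∧
          ∃ t : ℝ, 0 ≤ t ∧
            σ ((eLpNorm x₀ 2 (volume.restrict (Ici (0:ℝ)))).toReal)
                + γ ((eLpNorm u ⊤ (volume.restrict (Ici (0:ℝ)))).toReal)
              < (eLpNorm (shiftFlow b t x₀ u) 2 (volume.restrict (Ici (0:ℝ)))).toReal := by
  intro σ γ hσ hγ r hr
  obtain ⟨t, ht0, ht⟩ := exists_lt_toReal_eLpNorm_shiftFlow_expTailInput hb hbnn hbnotL1 hr (γ r)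
  refine ⟨fun _ => 0, MemLp.zero', by simpa using hr.le, expTailInput r t,
    expTailInput_mem_expDecaySet hr ht0, eLpNorm_top_expTailInput_le hr.le t _, t, ht0, ?_⟩
  rw [eLpNorm_zero', ENNReal.toReal_zero, hσ.2.2.1, zero_add]
  exact (hγ.2.1.monotoneOn ENNReal.toReal_nonneg hr.le
    (eLpNorm_top_expTailInput_le hr.le t _)).trans_lt ht
end
end

section
/- Let X := L²([0,∞),ℝ) and let 𝒰 := { u ∈ L^∞([0,∞),ℝ) : there exist τ_u ≥ 0 and C_u, α_u > 0 with |u(s)| ≤ C_u e^{−α_u s} for all s ≥ τ_u }, equipped with ‖·‖_𝒰 := ‖·‖_{L^∞}. Let b ∈ L²([0,∞),ℝ) and define φ : [0,∞) × X × 𝒰 → X by φ(t,x₀,u)(ζ) := x₀(ζ+t) + ∫₀^t u(s) b(ζ+t−s) ds. Then: (a) ‖φ(t,x₀,0)‖_{L²} ≤ ‖x₀‖_{L²} for all t ≥ 0 and x₀ ∈ X, so the system 𝔖 := (X,𝒰,φ) is zero-input uniformly globally stable; and (b) for every (x₀,u) ∈ X × 𝒰, ‖φ(t,x₀,u)‖_{L²}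 → 0 as t → ∞, i.e., 𝔖 is of weak asymptotic gain 0. -/
/-! The flow is the left shift of the initial state plus the forced response
`F_t ζ = ∫₀ᵗ u(s) b(ζ+t-s) ds`. The shift only discards the mass of `x₀` on `[0,t)`, which gives
stability, and the free part `‖x₀‖_{L²(t,∞)}` tends to `0`. For the forced part, Cauchy–Schwarz
with weight `|u|` and Tonelli give `‖F_t‖² ≤ ‖u‖₁ ∫₀ᵗ |u(s)| ‖b‖²_{L²(t-s,∞)} ds`; an exponentially
decaying bounded input is integrable, so this tends to `0` by dominated convergence, the tails of
`b` being bounded and vanishing. -/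

open MeasureTheory Filter Set Topology
open scoped ENNReal NNReal

noncomputable section

theorem tendsto_setLIntegral_Ici_atTop_zero {μ : Measure ℝ} {f : ℝ → ℝ≥0∞} {a : ℝ}
    (hf : ∫⁻ y in Ici a, f y ∂μ ≠ ∞) :
    Tendsto (fun r => ∫⁻ y in Ici r, f y ∂μ) atTop (𝓝 0) := by
  have h := tendsto_measure_iInter_atTop (μ := μ.withDensity f)
    (fun _ => measurableSet_Ici.nullMeasurableSet) (fun _ _ h => Ici_subset_Ici.2 h)
    ⟨a, by rwa [withDensity_apply _ measurableSet_Ici]⟩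
  rw [iInter_eq_empty_iff.2 fun y => ⟨y + 1, by simp⟩, measure_empty] at h
  simpa only [Function.comp_def, withDensity_apply _ measurableSet_Ici] using h

theorem tendsto_eLpNorm_restrict_Ici_atTop_zero {E : Type*} [NormedAddCommGroup E]
    {μ : Measure ℝ} {p : ℝ≥0∞} {f : ℝ → E} {a : ℝ} (hp₀ : p ≠ 0) (hp : p ≠ ∞)
    (hf : MemLp f p (μ.restrict (Ici a))) :
    Tendsto (fun r => eLpNorm f p (μ.restrict (Ici r))) atTop (𝓝 0) := by
  simp_rw [eLpNorm_eq_lintegral_rpow_enorm_toReal hp₀ hp]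
  have htail := tendsto_setLIntegral_Ici_atTop_zero
    (lintegral_rpow_enorm_lt_top_of_eLpNorm_lt_top hp₀ hp hf.eLpNorm_lt_top).ne
  have hpos : 0 < 1 / p.toReal := one_div_pos.2 (ENNReal.toReal_pos hp₀ hp)
  have h := ((ENNReal.continuous_rpow_const (y := 1 / p.toReal)).tendsto 0).comp htail
  rwa [ENNReal.zero_rpow_of_pos hpos] at h

theorem measurePreserving_add_right_restrict_Ici (t : ℝ) :
    MeasurePreserving (· + t) (volume.restrict (Ici 0)) (volume.restrict (Ici t)) := by
  simpa using (measurePreserving_add_right volume t).restrict_preimage (measurableSet_Ici (a := t))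

theorem setLIntegral_Ici_comp_add_right (f : ℝ → ℝ≥0∞) (t : ℝ) :
    ∫⁻ ζ in Ici 0, f (ζ + t) = ∫⁻ y in Ici t, f y :=
  (measurePreserving_add_right_restrict_Ici t).lintegral_comp_emb
    (measurableEmbedding_addRight t) f

theorem eLpNorm_comp_add_right_restrict_Ici {E : Type*} [NormedAddCommGroup E] {f : ℝ → E}
    (hf : AEStronglyMeasurable f (volume.restrict (Ici 0))) {t : ℝ} (ht : 0 ≤ t) (p : ℝ≥0∞) :
    eLpNorm (fun ζ => f (ζ + t)) p (volume.restrict (Ici 0))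
      = eLpNorm f p (volume.restrict (Ici t)) :=
  eLpNorm_comp_measurePreserving
    (hf.mono_measure (Measure.restrict_mono_set volume (Ici_subset_Ici.2 ht)))
    (measurePreserving_add_right_restrict_Ici t)

theorem lintegral_mul_sq_le {α : Type*} [MeasurableSpace α] {ν : Measure α} {V W : α → ℝ≥0∞}
    (hV : AEMeasurable V ν) (hW : AEMeasurable W ν) :
    (∫⁻ a, V a * W a ∂ν) ^ 2 ≤ (∫⁻ a, V a ∂ν) * ∫⁻ a, V a * W a ^ 2 ∂ν := by
  have hsqrt : ∀ e : ℝ≥0∞, e ^ (1 / 2 : ℝ) * e ^ (1 / 2 : ℝ) = e := fun e => by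
    rw [← ENNReal.rpow_add_of_nonneg _ _ (by norm_num) (by norm_num)]; norm_num
  have hsq : ∀ e : ℝ≥0∞, (e ^ (1 / 2 : ℝ)) ^ (2 : ℝ) = e := fun e => by
    rw [← ENNReal.rpow_mul]; norm_num
  have h := ENNReal.lintegral_mul_le_Lp_mul_Lq ν Real.HolderConjugate.two_two
    (hV.pow_const (1 / 2 : ℝ)) ((hV.pow_const (1 / 2 : ℝ)).mul hW)
  simp only [Pi.mul_apply, ← mul_assoc, hsqrt, ENNReal.mul_rpow_of_nonneg _ _ zero_le_two,
    hsq] at h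
  calc (∫⁻ a, V a * W a ∂ν) ^ 2
      ≤ ((∫⁻ a, V a ∂ν) ^ (1 / 2 : ℝ) * (∫⁻ a, V a * W a ^ (2 : ℝ) ∂ν) ^ (1 / 2 : ℝ)) ^ 2 := by
        gcongr
    _ = (∫⁻ a, V a ∂ν) * ∫⁻ a, V a * W a ^ 2 ∂ν := by
        simp only [mul_pow, ← ENNReal.rpow_two, hsq]

theorem tendsto_setLIntegral_Ioc_mul_comp_sub_atTop_zero {V T : ℝ → ℝ≥0∞} (hV : Measurable V)
    (hVfin : ∫⁻ s in Ioi 0, V s ≠ ∞) (hT : Antitone T) (hT₀ : T 0 ≠ ∞)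
    (hT_lim : Tendsto T atTop (𝓝 0)) :
    Tendsto (fun t => ∫⁻ s in Ioc 0 t, V s * T (t - s)) atTop (𝓝 0) := by
  have hIoc : ∀ t : ℝ, ∫⁻ s in Ioc 0 t, V s * T (t - s)
      = ∫⁻ s in Ioi 0, (Iic t).indicator (fun s => V s * T (t - s)) s := fun t => by
    rw [lintegral_indicator measurableSet_Iic, Measure.restrict_restrict measurableSet_Iic,
      Iic_inter_Ioi]
  simp_rw [hIoc]
  have h := tendsto_lintegral_filter_of_dominated_convergence (μ := volume.restrict (Ioi 0))
    (l := atTop) (F := fun t s => (Iic t).indicator (fun s => V s * T (t - s)) s) (f := 0)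
    (fun s => V s * T 0) ?_ ?_ ?_ ?_
  · simpa using h
  · exact Eventually.of_forall fun t =>
      (hV.mul (hT.measurable.comp (measurable_const.sub measurable_id))).indicator
        measurableSet_Iic
  · refine Eventually.of_forall fun t => ae_of_all _ fun s => ?_
    refine indicator_apply_le' (fun hs => ?_) (fun _ => zero_le)
    gcongr
    exact hT (sub_nonneg.2 hs)
  · rw [lintegral_mul_const _ hV]
    exact ENNReal.mul_ne_top hVfin hT₀
  · filter_upwards [ae_lt_top hV hVfin] with s hs
    have hlim : Tendsto (fun t => V s * T (t - s)) atTop (𝓝 0) := by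
      simpa [sub_eq_add_neg] using ENNReal.Tendsto.const_mul
        (hT_lim.comp (tendsto_atTop_add_const_right _ (-s) tendsto_id)) (Or.inr hs.ne)
    refine hlim.congr' ?_
    filter_upwards [eventually_ge_atTop s] with t ht
    rw [indicator_of_mem (mem_Iic.2 ht)]

theorem integrableOn_Ici_of_mem_ExpDecaySet {u : ℝ → ℝ} (hu : u ∈ ExpDecaySet) :
    IntegrableOn u (Ici 0) := by
  obtain ⟨hu_bdd, τ, C, a, hτ, -, ha, hu_decay⟩ := hu
  rw [← Ico_union_Ici_eq_Ici hτ]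
  refine IntegrableOn.union ?_ ?_
  · have : IsFiniteMeasure (volume.restrict (Ico (0 : ℝ) τ)) :=
      isFiniteMeasure_restrict.2 measure_Ico_lt_top.ne
    exact (hu_bdd.mono_measure (Measure.restrict_mono Ico_subset_Ici_self le_rfl)).integrable
      le_top
  · have hexp : IntegrableOn (fun s => C * Real.exp (-a * s)) (Ici τ) :=
      (integrableOn_Ici_iff_integrableOn_Ioi enorm_ne_top).2
        ((exp_neg_integrableOn_Ioi τ ha).const_mul C)
    exact hexp.mono' (hu_bdd.aestronglyMeasurable.mono_measure
        (Measure.restrict_mono (Ici_subset_Ici.2 hτ) le_rfl))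
      (ae_restrict_of_forall_mem measurableSet_Ici hu_decay)

def forcedResponse (b : ℝ → ℝ) (t : ℝ) (u : ℝ → ℝ) : ℝ → ℝ :=
  fun ζ => ∫ s in (0:ℝ)..t, u s * b (ζ + t - s)

theorem shiftFlow_eq_add (b : ℝ → ℝ) (t : ℝ) (x₀ u : ℝ → ℝ) :
    shiftFlow b t x₀ u = (fun ζ => x₀ (ζ + t)) + forcedResponse b t u :=
  rfl

theorem eLpNorm_shiftFlow_zero_input_le (b : ℝ → ℝ) {x₀ : ℝ → ℝ}
    (hx₀ : AEStronglyMeasurable x₀ (volume.restrict (Ici 0))) {t : ℝ} (ht : 0 ≤ t) (p : ℝ≥0∞) :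
    eLpNorm (shiftFlow b t x₀ (fun _ => 0)) p (volume.restrict (Ici 0))
      ≤ eLpNorm x₀ p (volume.restrict (Ici 0)) := by
  have hshift : shiftFlow b t x₀ (fun _ => 0) = fun ζ => x₀ (ζ + t) := by
    funext ζ; simp [shiftFlow]
  rw [hshift, eLpNorm_comp_add_right_restrict_Ici hx₀ ht]
  exact eLpNorm_mono_measure _ (Measure.restrict_mono_set volume (Ici_subset_Ici.2 ht))

theorem shiftFlow_eqOn_of_ae_eq {b b' u u' : ℝ → ℝ}
    (hb : b =ᵐ[volume.restrict (Ici 0)] b') (hu : u =ᵐ[volume.restrict (Ici 0)] u')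
    (x₀ : ℝ → ℝ) {t : ℝ} (ht : 0 ≤ t) :
    EqOn (shiftFlow b t x₀ u) (shiftFlow b' t x₀ u') (Ici 0) := by
  intro ζ hζ
  have hu' := (ae_restrict_iff' measurableSet_Ici).1 hu
  have hb' := (Measure.measurePreserving_sub_left volume (ζ + t)).quasiMeasurePreserving.ae
    ((ae_restrict_iff' measurableSet_Ici).1 hb)
  simp only [shiftFlow]
  congr 1
  refine intervalIntegral.integral_congr_ae ?_
  filter_upwards [hu', hb'] with s hus hbs hs
  rw [uIoc_of_le ht] at hs
  rw [hus hs.1.le, hbs (by simp only [mem_Ici] at hζ ⊢; linarith [hs.2])]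

theorem stronglyMeasurable_forcedResponse {b u : ℝ → ℝ} (hb : Measurable b) (hu : Measurable u)
    {t : ℝ} (ht : 0 ≤ t) : StronglyMeasurable (forcedResponse b t u) := by
  have h : StronglyMeasurable fun p : ℝ × ℝ => u p.2 * b (p.1 + t - p.2) := by
    apply Measurable.stronglyMeasurable; fun_prop
  have hIoc : forcedResponse b t u = fun ζ => ∫ s in Ioc 0 t, u s * b (ζ + t - s) :=
    funext fun ζ => intervalIntegral.integral_of_le ht
  exact hIoc ▸ h.integral_prod_right'

theorem lintegral_enorm_forcedResponse_sq_le {b u : ℝ → ℝ} (hb : Measurable b)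
    (hu : Measurable u) {t : ℝ} (ht : 0 ≤ t) :
    ∫⁻ ζ in Ici 0, ‖forcedResponse b t u ζ‖ₑ ^ 2
      ≤ (∫⁻ s in Ioc 0 t, ‖u s‖ₑ) * ∫⁻ s in Ioc 0 t, ‖u s‖ₑ * ∫⁻ y in Ici (t - s), ‖b y‖ₑ ^ 2 := by
  have hF : Measurable fun p : ℝ × ℝ => ‖u p.2‖ₑ * ‖b (p.1 + t - p.2)‖ₑ ^ 2 := by fun_prop
  have hpointwise : ∀ ζ, ‖forcedResponse b t u ζ‖ₑ ^ 2
      ≤ (∫⁻ s in Ioc 0 t, ‖u s‖ₑ) * ∫⁻ s in Ioc 0 t, ‖u s‖ₑ * ‖b (ζ + t - s)‖ₑ ^ 2 := by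
    intro ζ
    have h := enorm_integral_le_lintegral_enorm (μ := volume.restrict (Ioc 0 t))
      fun s => u s * b (ζ + t - s)
    simp only [enorm_mul] at h
    calc ‖forcedResponse b t u ζ‖ₑ ^ 2
        ≤ (∫⁻ s in Ioc 0 t, ‖u s‖ₑ * ‖b (ζ + t - s)‖ₑ) ^ 2 := by
          rw [forcedResponse, intervalIntegral.integral_of_le ht]; gcongr
      _ ≤ _ := lintegral_mul_sq_le (by fun_prop) (by fun_prop)
  calc ∫⁻ ζ in Ici 0, ‖forcedResponse b t u ζ‖ₑ ^ 2
      ≤ ∫⁻ ζ in Ici 0, (∫⁻ s in Ioc 0 t, ‖u s‖ₑ) *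
          ∫⁻ s in Ioc 0 t, ‖u s‖ₑ * ‖b (ζ + t - s)‖ₑ ^ 2 := lintegral_mono hpointwise
    _ = (∫⁻ s in Ioc 0 t, ‖u s‖ₑ) *
          ∫⁻ s in Ioc 0 t, ∫⁻ ζ in Ici 0, ‖u s‖ₑ * ‖b (ζ + t - s)‖ₑ ^ 2 := by
      rw [lintegral_const_mul _ hF.lintegral_prod_right',
        lintegral_lintegral_swap hF.aemeasurable]
    _ = _ := by
      congr 1
      refine lintegral_congr fun s => ?_
      rw [lintegral_const_mul' _ _ enorm_ne_top]
      simpa [add_sub_assoc] using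
        congrArg (‖u s‖ₑ * ·) (setLIntegral_Ici_comp_add_right (fun y => ‖b y‖ₑ ^ 2) (t - s))

theorem eLpNorm_shiftFlow_le {b u x₀ : ℝ → ℝ} (hb : Measurable b) (hu : Measurable u)
    (hx₀ : AEStronglyMeasurable x₀ (volume.restrict (Ici 0))) {t : ℝ} (ht : 0 ≤ t) :
    eLpNorm (shiftFlow b t x₀ u) 2 (volume.restrict (Ici 0))
      ≤ eLpNorm x₀ 2 (volume.restrict (Ici t)) + ((∫⁻ s in Ioc 0 t, ‖u s‖ₑ) *
          ∫⁻ s in Ioc 0 t, ‖u s‖ₑ * ∫⁻ y in Ici (t - s), ‖b y‖ₑ ^ 2) ^ (1 / 2 : ℝ) := by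
  have hshift : AEStronglyMeasurable (fun ζ => x₀ (ζ + t)) (volume.restrict (Ici 0)) :=
    (hx₀.mono_measure (Measure.restrict_mono_set volume (Ici_subset_Ici.2 ht)))
      |>.comp_measurePreserving (measurePreserving_add_right_restrict_Ici t)
  rw [shiftFlow_eq_add]
  refine (eLpNorm_add_le hshift (stronglyMeasurable_forcedResponse hb hu ht).aestronglyMeasurable
    one_le_two).trans ?_
  rw [eLpNorm_comp_add_right_restrict_Ici hx₀ ht,
    eLpNorm_eq_lintegral_rpow_enorm_toReal two_ne_zero ENNReal.ofNat_ne_top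
      (f := forcedResponse b t u)]
  simp only [ENNReal.toReal_ofNat, ENNReal.rpow_two]
  gcongr
  exact lintegral_enorm_forcedResponse_sq_le hb hu ht

theorem tendsto_eLpNorm_shiftFlow_atTop_zero {b x₀ u : ℝ → ℝ}
    (hb : MemLp b 2 (volume.restrict (Ici 0))) (hx₀ : MemLp x₀ 2 (volume.restrict (Ici 0)))
    (hu : IntegrableOn u (Ici 0)) :
    Tendsto (fun t => eLpNorm (shiftFlow b t x₀ u) 2 (volume.restrict (Ici 0))) atTop (𝓝 0) := by
  obtain ⟨b', hb'_meas, hbb'⟩ := hb.aestronglyMeasurable.aemeasurable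
  obtain ⟨u', hu'_meas, huu'⟩ := hu.aemeasurable
  set T : ℝ → ℝ≥0∞ := fun r => ∫⁻ y in Ici r, ‖b' y‖ₑ ^ 2
  have hT₀ : T 0 ≠ ∞ := by
    simpa [T, ENNReal.rpow_two] using (lintegral_rpow_enorm_lt_top_of_eLpNorm_lt_top two_ne_zero
      ENNReal.ofNat_ne_top (hb.ae_eq hbb').eLpNorm_lt_top).ne
  set U := ∫⁻ s in Ioi 0, ‖u' s‖ₑ
  have hU : U ≠ ∞ := ((hu.congr_fun_ae huu').mono_set Ioi_subset_Ici_self).2.ne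
  have hbound : ∀ t, 0 ≤ t → eLpNorm (shiftFlow b t x₀ u) 2 (volume.restrict (Ici 0))
      ≤ eLpNorm x₀ 2 (volume.restrict (Ici t))
        + (U * ∫⁻ s in Ioc 0 t, ‖u' s‖ₑ * T (t - s)) ^ (1 / 2 : ℝ) := by
    intro t ht
    rw [eLpNorm_congr_ae ((shiftFlow_eqOn_of_ae_eq hbb' huu' x₀ ht).aeEq_restrict
      measurableSet_Ici)]
    refine (eLpNorm_shiftFlow_le hb'_meas hu'_meas hx₀.1 ht).trans ?_
    gcongr
    exact lintegral_mono_set Ioc_subset_Ioi_self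
  have hfree := tendsto_eLpNorm_restrict_Ici_atTop_zero two_ne_zero ENNReal.ofNat_ne_top hx₀
  have hforced : Tendsto (fun t => (U * ∫⁻ s in Ioc 0 t, ‖u' s‖ₑ * T (t - s)) ^ (1 / 2 : ℝ))
      atTop (𝓝 0) := by
    have h := tendsto_setLIntegral_Ioc_mul_comp_sub_atTop_zero hu'_meas.enorm hU
      (fun r r' h => lintegral_mono_set (Ici_subset_Ici.2 h)) hT₀
      (tendsto_setLIntegral_Ici_atTop_zero hT₀)
    have hprod := ENNReal.Tendsto.const_mul h (Or.inr hU)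
    rw [mul_zero] at hprod
    have hsqrt := ((ENNReal.continuous_rpow_const (y := 1 / 2)).tendsto 0).comp hprod
    rwa [ENNReal.zero_rpow_of_pos (by norm_num)] at hsqrt
  refine tendsto_of_tendsto_of_tendsto_of_le_of_le' tendsto_const_nhds
    (by simpa only [add_zero] using hfree.add hforced) (Eventually.of_forall fun _ => zero_le) ?_
  filter_upwards [eventually_ge_atTop 0] using hbound

/-- Let `X = L²([0,∞),ℝ)`, let `𝒰` be the set of essentially bounded
functions eventually exponentially decaying to `0` with the `L^∞`-norm, `b ∈ L²([0,∞),ℝ)`,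
and `φ(t,x₀,u)(ζ) = x₀(ζ+t) + ∫₀^t u(s) b(ζ+t−s) ds`. Then (a) `‖φ(t,x₀,0)‖_{L²} ≤ ‖x₀‖_{L²}`
for all `t ≥ 0`, so the system is zero-input uniformly globally stable, and (b)
`‖φ(t,x₀,u)‖_{L²} → 0` as `t → ∞` for every `(x₀,u) ∈ X × 𝒰`, i.e. the system is of weak
asymptotic gain `0`. -/
theorem shift_system_zugs_and_weakAG_zero
    (b : ℝ → ℝ) (hb : MemLp b 2 (volume.restrict (Ici (0:ℝ)))) :
    ((∀ x₀ : ℝ → ℝ, MemLp x₀ 2 (volume.restrict (Ici (0:ℝ))) → ∀ t : ℝ, 0 ≤ t →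
        eLpNorm (shiftFlow b t x₀ (fun _ => 0)) 2 (volume.restrict (Ici (0:ℝ)))
          ≤ eLpNorm x₀ 2 (volume.restrict (Ici (0:ℝ)))) ∧
      ∃ σ : ℝ → ℝ, ClassK σ ∧
        ∀ x₀ : ℝ → ℝ, MemLp x₀ 2 (volume.restrict (Ici (0:ℝ))) → ∀ t : ℝ, 0 ≤ t →
          (eLpNorm (shiftFlow b t x₀ (fun _ => 0)) 2 (volume.restrict (Ici (0:ℝ)))).toReal
            ≤ σ ((eLpNorm x₀ 2 (volume.restrict (Ici (0:ℝ)))).toReal)) ∧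
    (∀ x₀ : ℝ → ℝ, MemLp x₀ 2 (volume.restrict (Ici (0:ℝ))) → ∀ u ∈ ExpDecaySet,
      Tendsto (fun t : ℝ =>
          (eLpNorm (shiftFlow b t x₀ u) 2 (volume.restrict (Ici (0:ℝ)))).toReal)
        atTop (nhds 0)) := by
  have hstable := fun x₀ (hx₀ : MemLp x₀ 2 (volume.restrict (Ici (0:ℝ)))) t (ht : (0:ℝ) ≤ t) =>
    eLpNorm_shiftFlow_zero_input_le b hx₀.1 ht 2
  refine ⟨⟨hstable, id, ⟨continuousOn_id, strictMonoOn_id, rfl, fun _ hr => hr⟩,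
    fun x₀ hx₀ t ht => ENNReal.toReal_mono hx₀.2.ne (hstable x₀ hx₀ t ht)⟩,
    fun x₀ hx₀ u hu => ?_⟩
  exact (ENNReal.tendsto_toReal ENNReal.zero_ne_top).comp
    (tendsto_eLpNorm_shiftFlow_atTop_zero hb hx₀ (integrableOn_Ici_of_mem_ExpDecaySet hu))
end
end

section
/- Let X, U be Hilbert spaces, let 𝔖 = (X,𝒰,φ) be a dynamical system with inputs with 0 ∈ 𝒰 and ‖0‖_𝒰 = 0, let B ∈ L(U,X) with B ≠ 0 and adjoint B* ∈ L(X,U), let D be a dense subset of X, and let (S_t)_{t≥0} be a C₀-semigroup on X that is strongly stable but not exponentially stable. Suppose that for every x₀ ∈ D with sup_{t≥0} ‖B* φ(t,x₀,0)‖ ≤ 1 one has φ(t,x₀,0) = S_t x₀ for all t ≥ 0. Then 𝔖 is NOT uniformly input-to-state stable. -/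
open MeasureTheory Filter Set Topology
open scoped ENNReal NNReal

noncomputable section

variable {X U : Type*} [NormedAddCommGroup X]

/-! Since `σ` is continuous with `σ 0 = 0`, initial data of norm at most some `δ > 0` keep
`‖B^* φ(t,x₀,0)‖ ≤ 1`, so on `D ∩ B̄(0,δ)` the zero-input trajectory is the semigroup orbit.
By density the bound `σ` then makes `(S_t)` uniformly bounded, and the uniform asymptotic gain
makes `‖S_{t₀}‖ < 1` for some `t₀ > 0`; a bounded semigroup with this property is exponentially
stable. -/

namespace ContinuousLinearMap

variable {E F : Type*} [NormedAddCommGroup E] [NormedSpace ℝ E]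
  [NormedAddCommGroup F] [NormedSpace ℝ F]

theorem opNorm_le_div_of_dense (T : E →L[ℝ] F) {D : Set E} (hD : Dense D) {δ C : ℝ}
    (hδ : 0 < δ) (hC : 0 ≤ C) (h : ∀ y ∈ D, ‖y‖ ≤ δ → ‖T y‖ ≤ C) : ‖T‖ ≤ C / δ := by
  have hball : Metric.closedBall (0 : E) δ ⊆ {x | ‖T x‖ ≤ C} :=
    calc Metric.closedBall (0 : E) δ = closure (Metric.ball 0 δ) := (closure_ball 0 hδ.ne').symm
      _ ⊆ closure (Metric.ball 0 δ ∩ D) :=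
        closure_minimal (hD.open_subset_closure_inter Metric.isOpen_ball) isClosed_closure
      _ ⊆ {x | ‖T x‖ ≤ C} :=
        closure_minimal (fun y ⟨hyδ, hyD⟩ => h y hyD (mem_ball_zero_iff.1 hyδ).le)
          (isClosed_le (by fun_prop) continuous_const)
  refine opNorm_le_of_unit_norm (div_nonneg hC hδ.le) fun x hx => ?_
  have hδx : ‖T (δ • x)‖ ≤ C := hball (by simp [norm_smul, hx, abs_of_pos hδ])
  rw [map_smul, norm_smul, Real.norm_of_nonneg hδ.le] at hδx
  rwa [le_div_iff₀' hδ]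

end ContinuousLinearMap

section Semigroup

variable {𝕜 E : Type*} [NontriviallyNormedField 𝕜] [NormedAddCommGroup E] [NormedSpace 𝕜 E]
  {T : ℝ → E →L[𝕜] E}

theorem norm_semigroup_le_mul_pow (hT : ∀ s t : ℝ, 0 ≤ s → 0 ≤ t → T (t + s) = (T t).comp (T s))
    {M t₀ : ℝ} (hM : ∀ t : ℝ, 0 ≤ t → ‖T t‖ ≤ M) (ht₀ : 0 ≤ t₀) (n : ℕ) {s : ℝ} (hs : 0 ≤ s) :
    ‖T (n * t₀ + s)‖ ≤ M * ‖T t₀‖ ^ n := by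
  induction n with
  | zero => simpa using hM s hs
  | succ n ih =>
    have hns : 0 ≤ n * t₀ + s := by positivity
    calc ‖T ((n + 1 : ℕ) * t₀ + s)‖ = ‖(T (n * t₀ + s)).comp (T t₀)‖ := by
          rw [← hT t₀ _ ht₀ hns]; push_cast; ring_nf
      _ ≤ ‖T (n * t₀ + s)‖ * ‖T t₀‖ := ContinuousLinearMap.opNorm_comp_le _ _
      _ ≤ M * ‖T t₀‖ ^ n * ‖T t₀‖ := by gcongr
      _ = M * ‖T t₀‖ ^ (n + 1) := by ring

theorem pow_floor_div_le_exp {q : ℝ} (a t : ℝ) (hq0 : 0 < q) (hq1 : q ≤ 1) :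
    q ^ ⌊t / a⌋₊ ≤ q⁻¹ * Real.exp (Real.log q / a * t) := by
  have hfloor : t / a - 1 ≤ ⌊t / a⌋₊ := by linarith [Nat.lt_floor_add_one (t / a)]
  have hlog : Real.log q ≤ 0 := Real.log_nonpos hq0.le hq1
  calc q ^ ⌊t / a⌋₊ = Real.exp (⌊t / a⌋₊ * Real.log q) := by
        rw [Real.exp_nat_mul, Real.exp_log hq0]
    _ ≤ Real.exp ((t / a - 1) * Real.log q) :=
        Real.exp_le_exp.2 (mul_le_mul_of_nonpos_right hfloor hlog)
    _ = q⁻¹ * Real.exp (Real.log q / a * t) := by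
        rw [← Real.exp_log (inv_pos.2 hq0), ← Real.exp_add, Real.log_inv]; ring_nf

theorem exists_exp_bound_of_norm_lt_one
    (hT : ∀ s t : ℝ, 0 ≤ s → 0 ≤ t → T (t + s) = (T t).comp (T s))
    {M t₀ : ℝ} (hM : ∀ t : ℝ, 0 ≤ t → ‖T t‖ ≤ M) (ht₀ : 0 < t₀) (hcontr : ‖T t₀‖ < 1) :
    ∃ M ω : ℝ, 0 < M ∧ 0 < ω ∧ ∀ t : ℝ, 0 ≤ t → ‖T t‖ ≤ M * Real.exp (-ω * t) := by
  obtain ⟨q, hTq, hq1⟩ := exists_between hcontr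
  have hq0 : 0 < q := (norm_nonneg _).trans_lt hTq
  have hM0 : 0 ≤ M := (norm_nonneg _).trans (hM 0 le_rfl)
  refine ⟨(M + 1) * q⁻¹, -(Real.log q / t₀), by positivity,
    neg_pos.2 (div_neg_of_neg_of_pos (Real.log_neg hq0 hq1) ht₀), fun t ht => ?_⟩
  set n := ⌊t / t₀⌋₊
  have hs : 0 ≤ t - n * t₀ := by
    linarith [mul_le_mul_of_nonneg_right (Nat.floor_le (div_nonneg ht ht₀.le)) ht₀.le,
      div_mul_cancel₀ t ht₀.ne']
  calc ‖T t‖ = ‖T (n * t₀ + (t - n * t₀))‖ := by ring_nf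
    _ ≤ M * ‖T t₀‖ ^ n := norm_semigroup_le_mul_pow hT hM ht₀.le n hs
    _ ≤ (M + 1) * q ^ n := by gcongr; linarith
    _ ≤ (M + 1) * (q⁻¹ * Real.exp (Real.log q / t₀ * t)) := by
        gcongr; exact pow_floor_div_le_exp t₀ t hq0 hq1.le
    _ = (M + 1) * q⁻¹ * Real.exp (-(-(Real.log q / t₀)) * t) := by ring_nf

end Semigroup

theorem ClassK.exists_pos_forall_le {σ : ℝ → ℝ} (hσ : ClassK σ) {c : ℝ} (hc : 0 < c) :
    ∃ δ > 0, ∀ s : ℝ, 0 ≤ s → s ≤ δ → σ s ≤ c := by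
  obtain ⟨δ, hδ, hσδ⟩ := Metric.continuousWithinAt_iff.1 (hσ.1 0 self_mem_Ici) c hc
  refine ⟨δ / 2, half_pos hδ, fun s hs hsδ => ?_⟩
  have hdist := hσδ (mem_Ici.2 hs) (by rw [Real.dist_0_eq_abs, abs_of_nonneg hs]; linarith)
  rw [hσ.2.2.1, Real.dist_0_eq_abs] at hdist
  exact (le_abs_self _).trans hdist.le

theorem ClassKZero.map_zero {γ : ℝ → ℝ} (hγ : ClassKZero γ) : γ 0 = 0 :=
  hγ.elim (fun h => h.2.2.1) (fun h => h 0)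

section Flow

variable [Zero U] {S : DynSysWithInputs X U}

theorem UGSWith.norm_flow_zero_le {σ γ : ℝ → ℝ} (h : UGSWith S σ γ) (hγ : γ 0 = 0)
    (hz : (fun _ : ℝ => (0 : U)) ∈ S.inputs) (hznorm : S.inNorm (fun _ : ℝ => (0 : U)) = 0)
    (x₀ : X) {t : ℝ} (ht : 0 ≤ t) : ‖S.flow t x₀ (fun _ : ℝ => (0 : U))‖ ≤ σ ‖x₀‖ := by
  simpa [hznorm, hγ] using h x₀ _ hz t ht

theorem UniformAGWith.exists_norm_flow_zero_le {γ : ℝ → ℝ} (h : UniformAGWith S γ)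
    (hγ : γ 0 = 0) (hz : (fun _ : ℝ => (0 : U)) ∈ S.inputs)
    (hznorm : S.inNorm (fun _ : ℝ => (0 : U)) = 0) {ε r : ℝ} (hε : 0 < ε) (hr : 0 < r) :
    ∃ τ ≥ 0, ∀ t : ℝ, τ ≤ t → ∀ x₀ : X, ‖x₀‖ ≤ r → ‖S.flow t x₀ (fun _ : ℝ => (0 : U))‖ ≤ ε := by
  obtain ⟨τ, hτ, hflow⟩ := h ε hε r hr
  exact ⟨τ, hτ, fun t ht x₀ hx₀ => by simpa [hznorm, hγ] using hflow t ht x₀ hx₀ _ hz⟩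

end Flow

theorem semilinear_not_uniformISS_general
    {X' U' : Type*}
    [NormedAddCommGroup X'] [InnerProductSpace ℝ X'] [CompleteSpace X']
    [NormedAddCommGroup U'] [InnerProductSpace ℝ U'] [CompleteSpace U']
    (S : DynSysWithInputs X' U')
    (hz : (fun _ : ℝ => (0 : U')) ∈ S.inputs)
    (hznorm : S.inNorm (fun _ : ℝ => (0 : U')) = 0)
    (B : U' →L[ℝ] X')
    (D : Set X') (hD : Dense D)
    (Sem : ℝ → X' →L[ℝ] X')
    (hSemAdd : ∀ s t : ℝ, 0 ≤ s → 0 ≤ t → Sem (t + s) = (Sem t).comp (Sem s))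
    (hSemNotExp : ¬ ∃ M ω : ℝ, 0 < M ∧ 0 < ω ∧
      ∀ t : ℝ, 0 ≤ t → ‖Sem t‖ ≤ M * Real.exp (-ω * t))
    (hflow : ∀ x₀ ∈ D,
      (∀ t : ℝ, 0 ≤ t →
        ‖(ContinuousLinearMap.adjoint B) (S.flow t x₀ (fun _ : ℝ => (0 : U')))‖ ≤ 1) →
      ∀ t : ℝ, 0 ≤ t → S.flow t x₀ (fun _ : ℝ => (0 : U')) = Sem t x₀) :
    ¬ UniformISS S := by
  rintro ⟨⟨σ, γ, hσ, hγ, hUGS⟩, γ', hγ', hAG⟩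
  have hbound := hUGS.norm_flow_zero_le hγ.2.2.1 hz hznorm
  set c := (‖ContinuousLinearMap.adjoint B‖ + 1)⁻¹
  have hc : 0 < c := by positivity
  obtain ⟨δ, hδ, hσδ⟩ := hσ.exists_pos_forall_le hc
  have hagree : ∀ x₀ ∈ D, ‖x₀‖ ≤ δ → ∀ t : ℝ, 0 ≤ t →
      S.flow t x₀ (fun _ : ℝ => (0 : U')) = Sem t x₀ := by
    refine fun x₀ hx₀ hx₀δ => hflow x₀ hx₀ fun t ht => ?_
    calc _ ≤ ‖ContinuousLinearMap.adjoint B‖ * c :=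
          ContinuousLinearMap.le_opNorm_of_le _
            ((hbound x₀ ht).trans (hσδ _ (norm_nonneg _) hx₀δ))
      _ ≤ 1 := by rw [← div_eq_mul_inv, div_le_one (by positivity)]; linarith
  have hbdd : ∀ t : ℝ, 0 ≤ t → ‖Sem t‖ ≤ c / δ := fun t ht =>
    (Sem t).opNorm_le_div_of_dense hD hδ hc.le fun y hy hyδ =>
      hagree y hy hyδ t ht ▸ (hbound y ht).trans (hσδ _ (norm_nonneg _) hyδ)
  obtain ⟨τ, hτ, hτflow⟩ := hAG.exists_norm_flow_zero_le hγ'.map_zero hz hznorm (half_pos hδ) hδ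
  have hcontr : ‖Sem (τ + 1)‖ < 1 :=
    calc ‖Sem (τ + 1)‖ ≤ δ / 2 / δ := (Sem (τ + 1)).opNorm_le_div_of_dense hD hδ (by positivity)
          fun y hy hyδ => hagree y hy hyδ (τ + 1) (by linarith) ▸ hτflow (τ + 1) (by linarith) y hyδ
      _ < 1 := by rw [div_lt_one hδ]; linarith
  exact hSemNotExp (exists_exp_bound_of_norm_lt_one hSemAdd hbdd (by linarith) hcontr)

/-- **Section 4.3.** Let `X`, `U` be Hilbert spaces, `𝔖 = (X,𝒰,φ)` a dynamical
system with inputs with `0 ∈ 𝒰` (of zero norm), `B ∈ L(U,X) \ {0}`, `D ⊆ X` dense, and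
`(S_t)` a strongly stable but not exponentially stable `C₀`-semigroup on `X`. If for every
`x₀ ∈ D` with `sup_{t ≥ 0} ‖B^* φ(t,x₀,0)‖ ≤ 1` one has `φ(t,x₀,0) = S_t x₀` for all `t ≥ 0`,
then `𝔖` is not uniformly input-to-state stable. -/
theorem semilinear_not_uniformISS
    {X' U' : Type*}
    [NormedAddCommGroup X'] [InnerProductSpace ℝ X'] [CompleteSpace X']
    [NormedAddCommGroup U'] [InnerProductSpace ℝ U'] [CompleteSpace U']
    (S : DynSysWithInputs X' U')
    (hz : (fun _ : ℝ => (0 : U')) ∈ S.inputs)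
    (hznorm : S.inNorm (fun _ : ℝ => (0 : U')) = 0)
    (B : U' →L[ℝ] X') (hB : B ≠ 0)
    (D : Set X') (hD : Dense D)
    (Sem : ℝ → X' →L[ℝ] X')
    (hSem0 : Sem 0 = ContinuousLinearMap.id ℝ X')
    (hSemAdd : ∀ s t : ℝ, 0 ≤ s → 0 ≤ t → Sem (t + s) = (Sem t).comp (Sem s))
    (hSemCont : ∀ x : X', ContinuousOn (fun t => Sem t x) (Ici 0))
    (hSemStab : ∀ x : X', Tendsto (fun t => Sem t x) atTop (nhds 0))
    (hSemNotExp : ¬ ∃ M ω : ℝ, 0 < M ∧ 0 < ω ∧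
      ∀ t : ℝ, 0 ≤ t → ‖Sem t‖ ≤ M * Real.exp (-ω * t))
    (hflow : ∀ x₀ ∈ D,
      (∀ t : ℝ, 0 ≤ t →
        ‖(ContinuousLinearMap.adjoint B) (S.flow t x₀ (fun _ : ℝ => (0 : U')))‖ ≤ 1) →
      ∀ t : ℝ, 0 ≤ t → S.flow t x₀ (fun _ : ℝ => (0 : U')) = Sem t x₀) :
    ¬ UniformISS S :=
  semilinear_not_uniformISS_general S hz hznorm B D hD Sem hSemAdd hSemNotExp hflow
end
end
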